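/- arXiv:1508.01783 — 4 statements merged into one kernel-verified Lean document; each statement's English description precedes it below -/
import Mathlib

section
/- If μᵢ < b for every i ∈ {1, …, k}, set S := Σ_{i=1}^k 1/(b − μᵢ) > 0. Then max_{z ∈ Δ} g(z) = b − 1/S, and g attains its maximum on Δ at exactly one point y, given by yᵢ = 1/(S (b − μᵢ)) for each i; in particular yᵢ > 0 for every i, so y lies in the relative interior of Δ. -/
/-!
With `cᵢ := b - μᵢ > 0` one has `g z = b - ∑ cᵢ zᵢ²`. On the hyperplane `∑ zᵢ = 1`, completing the
square around `yᵢ = 1/(S cᵢ)` (the point where `cᵢ yᵢ = 1/S` is constant) gives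
`∑ cᵢ zᵢ² = 1/S + ∑ cᵢ (zᵢ - yᵢ)²`, so `∑ cᵢ zᵢ²` is minimal, equal to `1/S`, exactly at `z = y`,
and `y` lies in the simplex.
-/

open Finset

section WeightedSumSq

variable {ι : Type*} [Fintype ι] {c : ι → ℝ} {S : ℝ}

lemma sum_one_div_mul_eq_one (hS : S = ∑ i, 1 / c i) (hS0 : S ≠ 0) :
    ∑ i, 1 / (S * c i) = 1 := by
  simp_rw [← one_div_mul_one_div, ← mul_sum, ← hS, one_div_mul_cancel hS0]

lemma sum_mul_sq_eq_one_div_add_sum_mul_sub_sq (hc : ∀ i, c i ≠ 0) (hS : S = ∑ i, 1 / c i)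
    (hS0 : S ≠ 0) {z : ι → ℝ} (hz : ∑ i, z i = 1) :
    ∑ i, c i * z i ^ 2 = 1 / S + ∑ i, c i * (z i - 1 / (S * c i)) ^ 2 := by
  have expand : ∀ i, c i * (z i - 1 / (S * c i)) ^ 2
      = c i * z i ^ 2 - 2 / S * z i + 1 / S * (1 / (S * c i)) := fun i => by
    have := hc i
    field_simp
    ring
  simp_rw [expand, sum_add_distrib, sum_sub_distrib, ← mul_sum, hz, sum_one_div_mul_eq_one hS hS0]
  ring

lemma one_div_le_sum_mul_sq (hc : ∀ i, 0 < c i) (hS : S = ∑ i, 1 / c i) (hS0 : S ≠ 0)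
    {z : ι → ℝ} (hz : ∑ i, z i = 1) : 1 / S ≤ ∑ i, c i * z i ^ 2 := by
  rw [sum_mul_sq_eq_one_div_add_sum_mul_sub_sq (fun i => (hc i).ne') hS hS0 hz]
  exact le_add_of_nonneg_right <| sum_nonneg fun i _ => by have := hc i; positivity

lemma sum_mul_sq_eq_one_div_iff (hc : ∀ i, 0 < c i) (hS : S = ∑ i, 1 / c i) (hS0 : S ≠ 0)
    {z : ι → ℝ} (hz : ∑ i, z i = 1) :
    ∑ i, c i * z i ^ 2 = 1 / S ↔ z = fun i => 1 / (S * c i) := by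
  rw [sum_mul_sq_eq_one_div_add_sum_mul_sub_sq (fun i => (hc i).ne') hS hS0 hz, add_eq_left,
    sum_eq_zero_iff_of_nonneg fun i _ => by have := hc i; positivity, funext_iff]
  simp [(hc _).ne', sub_eq_zero]

end WeightedSumSq

theorem stmt_2_general (k : ℕ) (hk : 2 ≤ k) (b : ℝ)
    (μ : Fin k → ℝ)
    (g : (Fin k → ℝ) → ℝ)
    (hg : ∀ z, g z = b + ∑ i, z i ^ 2 * (μ i - b))
    (Δ : Set (Fin k → ℝ)) (hΔ : Δ = {z | (∀ i, 0 ≤ z i) ∧ ∑ i, z i = 1})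
    (hμb : ∀ i, μ i < b)
    (S : ℝ) (hS : S = ∑ i, 1 / (b - μ i)) :
    0 < S ∧
    IsGreatest (g '' Δ) (b - 1 / S) ∧
    (∀ i, 0 < 1 / (S * (b - μ i))) ∧
    (∀ z ∈ Δ, (IsMaxOn g Δ z ↔ z = fun i => 1 / (S * (b - μ i)))) := by
  have : Nonempty (Fin k) := Fin.pos_iff_nonempty.mp (by omega)
  have hc : ∀ i, 0 < b - μ i := fun i => sub_pos.mpr (hμb i)
  have hSpos : 0 < S := hS ▸ sum_pos (fun i _ => one_div_pos.mpr (hc i)) univ_nonempty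
  set y : Fin k → ℝ := fun i => 1 / (S * (b - μ i))
  have hypos : ∀ i, 0 < y i := fun i => by have := hc i; positivity
  have hg' : ∀ z, g z = b - ∑ i, (b - μ i) * z i ^ 2 := fun z => by
    rw [hg, sub_eq_add_neg, ← sum_neg_distrib]
    exact congrArg _ <| sum_congr rfl fun i _ => by ring
  have hysum : ∑ i, y i = 1 := sum_one_div_mul_eq_one hS hSpos.ne'
  have hgy : g y = b - 1 / S := by
    rw [hg', (sum_mul_sq_eq_one_div_iff hc hS hSpos.ne' hysum).mpr rfl]
  have hyΔ : y ∈ Δ := hΔ ▸ ⟨fun i => (hypos i).le, hysum⟩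
  have hΔsum : ∀ z ∈ Δ, ∑ i, z i = 1 := hΔ ▸ fun z hz => hz.2
  have hbound : ∀ z ∈ Δ, g z ≤ b - 1 / S := fun z hz => by
    rw [hg']
    linarith [one_div_le_sum_mul_sq hc hS hSpos.ne' (hΔsum z hz)]
  refine ⟨hSpos, ⟨⟨y, hyΔ, hgy⟩, ?_⟩, hypos, fun z hz => ⟨?_, ?_⟩⟩
  · rintro _ ⟨z, hz, rfl⟩
    exact hbound z hz
  · intro hmax
    have hgz : g y ≤ g z := hmax hyΔ
    rw [hgy, hg'] at hgz
    exact (sum_mul_sq_eq_one_div_iff hc hS hSpos.ne' (hΔsum z hz)).mp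
      (le_antisymm (by linarith) (one_div_le_sum_mul_sq hc hS hSpos.ne' (hΔsum z hz)))
  · rintro rfl w hw
    exact hgy ▸ hbound w hw

/-- if `μᵢ < b` for every `i`, then with `S = ∑ᵢ 1/(b - μᵢ) > 0` one has
`max_{Δ} g = b - 1/S`, attained at exactly one point `y`, with `yᵢ = 1/(S (b - μᵢ)) > 0`. -/
theorem stmt_2 (k : ℕ) (hk : 2 ≤ k) (b : ℝ) (hb : 0 < b)
    (μ : Fin k → ℝ) (hμ : ∀ i, 0 < μ i)
    (g : (Fin k → ℝ) → ℝ)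
    (hg : ∀ z, g z = b + ∑ i, z i ^ 2 * (μ i - b))
    (Δ : Set (Fin k → ℝ)) (hΔ : Δ = {z | (∀ i, 0 ≤ z i) ∧ ∑ i, z i = 1})
    (hμb : ∀ i, μ i < b)
    (S : ℝ) (hS : S = ∑ i, 1 / (b - μ i)) :
    0 < S ∧
    IsGreatest (g '' Δ) (b - 1 / S) ∧
    (∀ i, 0 < 1 / (S * (b - μ i))) ∧
    (∀ z ∈ Δ, (IsMaxOn g Δ z ↔ z = fun i => 1 / (S * (b - μ i)))) :=
  stmt_2_general k hk b μ g hg Δ hΔ hμb S hS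
end

section
/- If max_{1≤i≤k} μᵢ > b, then f_max = max_{1≤i≤k} μᵢ, and the maximizers of f on the unit sphere S^{k−1} are exactly the vectors ±e_i (where e_i is the i-th standard basis vector of ℝ^k), over those indices i with μᵢ = max_{1≤j≤k} μⱼ. -/
/-!
On the unit sphere `∑ i, ∑ j ≠ i, xᵢ² xⱼ² = 1 - ∑ xᵢ⁴`, so with `tᵢ = xᵢ²` the function becomes
`b + ∑ (μᵢ - b) tᵢ²` on the simplex `∑ tᵢ = 1`. Since `0 ≤ tᵢ ≤ 1` and `b < M`, each term
satisfies `(μᵢ - b) tᵢ² ≤ (M - b) tᵢ`, which gives `f ≤ M`; equality in a term with `tᵢ > 0`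
forces `tᵢ = 1` and `μᵢ = M`, i.e. `x = ±eᵢ`.
-/

open Finset

section TermBound

variable {μ b M t : ℝ}

/-- `(M - b) t - (μ - b) t² = (M - μ) t² + (M - b) t (1 - t)`, a sum of nonnegative terms. -/
lemma sub_mul_sq_le (ht₀ : 0 ≤ t) (ht₁ : t ≤ 1) (hμ : μ ≤ M) (hb : b ≤ M) :
    (μ - b) * t ^ 2 ≤ (M - b) * t := by
  nlinarith [mul_nonneg (sub_nonneg.2 hμ) (sq_nonneg t),
    mul_nonneg (sub_nonneg.2 hb) (mul_nonneg ht₀ (sub_nonneg.2 ht₁))]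

lemma eq_one_of_sub_mul_sq_eq (ht₀ : 0 < t) (ht₁ : t ≤ 1) (hμ : μ ≤ M) (hb : b < M)
    (h : (μ - b) * t ^ 2 = (M - b) * t) : t = 1 ∧ μ = M := by
  have hμt : 0 ≤ (M - μ) * t ^ 2 := mul_nonneg (sub_nonneg.2 hμ) (sq_nonneg t)
  have hbt : 0 ≤ (M - b) * t * (1 - t) :=
    mul_nonneg (mul_nonneg (sub_nonneg.2 hb.le) ht₀.le) (sub_nonneg.2 ht₁)
  have ht : t = 1 := by
    have : (M - b) * t * (1 - t) = 0 := by linarith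
    rcases mul_eq_zero.1 this with h' | h'
    · exact absurd h' (mul_pos (sub_pos.2 hb) ht₀).ne'
    · linarith
  subst ht
  exact ⟨rfl, by linarith⟩

end TermBound

variable {ι : Type*} [Fintype ι]

lemma sq_le_one_of_sum_sq_eq_one {x : ι → ℝ} (hx : ∑ j, x j ^ 2 = 1) (i : ι) :
    x i ^ 2 ≤ 1 :=
  hx ▸ single_le_sum (fun j _ => sq_nonneg (x j)) (mem_univ i)

variable [DecidableEq ι]

noncomputable def quarticForm (μ : ι → ℝ) (b : ℝ) (x : ι → ℝ) : ℝ :=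
  ∑ i, μ i * x i ^ 4 + b * ∑ i, ∑ j ∈ univ.erase i, x i ^ 2 * x j ^ 2

lemma sum_sum_erase_mul {R : Type*} [CommRing R] (y : ι → R) :
    ∑ i, ∑ j ∈ univ.erase i, y i * y j = (∑ i, y i) ^ 2 - ∑ i, y i ^ 2 := by
  simp only [← mul_sum, sum_erase_eq_sub (mem_univ _), sum_sub_distrib, ← sum_mul, sq]

lemma quarticForm_eq (μ : ι → ℝ) (b : ℝ) (x : ι → ℝ) :
    quarticForm μ b x = ∑ i, (μ i - b) * (x i ^ 2) ^ 2 + b * (∑ i, x i ^ 2) ^ 2 := by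
  rw [quarticForm, sum_sum_erase_mul fun i => x i ^ 2, mul_sub, mul_sum _ _ b]
  simp only [sub_mul, sum_sub_distrib, ← pow_mul]
  ring

lemma quarticForm_single (μ : ι → ℝ) (b : ℝ) (i : ι) (c : ℝ) :
    quarticForm μ b (Pi.single i c) = μ i * c ^ 4 := by
  rw [quarticForm_eq, Fintype.sum_eq_single i fun j hj => by simp [hj],
    Fintype.sum_eq_single i fun j hj => by simp [hj]]
  simp only [Pi.single_eq_same]
  ring

lemma quarticForm_single_of_sq_eq_one (μ : ι → ℝ) (b : ℝ) (i : ι) {c : ℝ}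
    (hc : c ^ 2 = 1) : quarticForm μ b (Pi.single i c) = μ i := by
  rw [quarticForm_single, show c ^ 4 = (c ^ 2) ^ 2 by ring, hc, one_pow, mul_one]

lemma sum_sq_single (i : ι) (c : ℝ) :
    ∑ j, (Pi.single i c : ι → ℝ) j ^ 2 = c ^ 2 := by
  rw [Fintype.sum_eq_single i fun j hj => by simp [hj], Pi.single_eq_same]

lemma eq_single_of_sum_sq_eq {x : ι → ℝ} {i : ι} (h : ∑ j, x j ^ 2 = x i ^ 2) :
    x = Pi.single i (x i) := by
  have hrest : ∑ j ∈ univ.erase i, x j ^ 2 = 0 := by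
    rw [sum_erase_eq_sub (mem_univ i), h, sub_self]
  funext j
  by_cases hj : j = i
  · subst hj
    rw [Pi.single_eq_same]
  · rw [Pi.single_eq_of_ne hj]
    exact pow_eq_zero_iff two_ne_zero |>.1 <|
      (sum_eq_zero_iff_of_nonneg fun l _ => sq_nonneg (x l)).1 hrest j
        (mem_erase.2 ⟨hj, mem_univ j⟩)

section Sphere

variable {μ : ι → ℝ} {b M : ℝ} {x : ι → ℝ}

lemma quarticForm_le_of_sum_sq_eq_one (hμ : ∀ i, μ i ≤ M) (hb : b ≤ M)
    (hx : ∑ i, x i ^ 2 = 1) : quarticForm μ b x ≤ M := by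
  have hterm : ∑ i, (μ i - b) * (x i ^ 2) ^ 2 ≤ ∑ i, (M - b) * x i ^ 2 :=
    sum_le_sum fun i _ => sub_mul_sq_le (sq_nonneg _) (sq_le_one_of_sum_sq_eq_one hx i) (hμ i) hb
  rw [← mul_sum, hx] at hterm
  rw [quarticForm_eq, hx]
  linarith

lemma exists_eq_single_of_quarticForm_eq (hμ : ∀ i, μ i ≤ M) (hb : b < M)
    (hx : ∑ i, x i ^ 2 = 1) (hfx : quarticForm μ b x = M) :
    ∃ i, μ i = M ∧ (x = Pi.single i 1 ∨ x = Pi.single i (-1)) := by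
  have hterm i := sub_mul_sq_le (sq_nonneg (x i)) (sq_le_one_of_sum_sq_eq_one hx i) (hμ i) hb.le
  have hgap : ∑ i, ((M - b) * x i ^ 2 - (μ i - b) * (x i ^ 2) ^ 2) = 0 := by
    rw [quarticForm_eq, hx] at hfx
    rw [sum_sub_distrib, ← mul_sum, hx]
    linarith
  obtain ⟨i, -, hi⟩ := exists_ne_zero_of_sum_ne_zero (hx.trans_ne one_ne_zero)
  have hgap_i := (sum_eq_zero_iff_of_nonneg fun j _ => sub_nonneg.2 (hterm j)).1 hgap i (mem_univ i)
  obtain ⟨hxi, hμi⟩ := eq_one_of_sub_mul_sq_eq (lt_of_le_of_ne (sq_nonneg _) hi.symm)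
    (sq_le_one_of_sum_sq_eq_one hx i) (hμ i) hb (sub_eq_zero.1 hgap_i).symm
  have hx_single := eq_single_of_sum_sq_eq (hx.trans hxi.symm)
  refine ⟨i, hμi, ?_⟩
  rcases sq_eq_one_iff.1 hxi with h | h <;> rw [h] at hx_single <;> simp [hx_single]

lemma isMaxOn_quarticForm_single (hμ : ∀ j, μ j ≤ M) (hb : b ≤ M) {i : ι}
    (hi : μ i = M) {c : ℝ} (hc : c ^ 2 = 1) :
    IsMaxOn (quarticForm μ b) {x | ∑ j, x j ^ 2 = 1} (Pi.single i c) :=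
  isMaxOn_iff.2 fun _ hy => (quarticForm_le_of_sum_sq_eq_one hμ hb hy).trans_eq <| by
    rw [quarticForm_single_of_sq_eq_one μ b i hc, hi]

end Sphere

theorem stmt_4_general (k : ℕ) (b : ℝ)
    (μ : Fin k → ℝ)
    (f : (Fin k → ℝ) → ℝ)
    (hf : ∀ x, f x = ∑ i, μ i * x i ^ 4 +
      b * ∑ i, ∑ j ∈ Finset.univ.erase i, x i ^ 2 * x j ^ 2)
    (S : Set (Fin k → ℝ)) (hS : S = {x | ∑ i, x i ^ 2 = 1})
    (fmax : ℝ) (hfmax : IsGreatest (f '' S) fmax)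
    (M : ℝ) (hM : IsGreatest (Set.range μ) M) (hbM : b < M) :
    fmax = M ∧
    (∀ x ∈ S, (IsMaxOn f S x ↔
      ∃ i, μ i = M ∧ (x = Pi.single i 1 ∨ x = Pi.single i (-1)))) := by
  obtain rfl : f = quarticForm μ b := funext hf
  subst hS
  have hμM : ∀ i, μ i ≤ M := fun i => hM.2 ⟨i, rfl⟩
  obtain ⟨i₀, hi₀⟩ := hM.1
  have hmem₀ : ∑ j, (Pi.single i₀ 1 : Fin k → ℝ) j ^ 2 = 1 :=
    (sum_sq_single i₀ 1).trans (one_pow 2)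
  have hval₀ : quarticForm μ b (Pi.single i₀ 1) = M := by
    rw [quarticForm_single_of_sq_eq_one μ b i₀ (one_pow 2), hi₀]
  have hmax₀ := isMaxOn_quarticForm_single hμM hbM.le hi₀ (one_pow 2)
  refine ⟨hfmax.unique ⟨⟨_, hmem₀, hval₀⟩, ?_⟩,
    fun x hx => ⟨fun hmax => ?_, ?_⟩⟩
  · rintro _ ⟨x, hx, rfl⟩
    exact hval₀ ▸ hmax₀ hx
  · exact exists_eq_single_of_quarticForm_eq hμM hbM hx <|
      le_antisymm (quarticForm_le_of_sum_sq_eq_one hμM hbM.le hx) (hval₀ ▸ hmax hmem₀)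
  · rintro ⟨i, hiM, rfl | rfl⟩
    exacts [isMaxOn_quarticForm_single hμM hbM.le hiM (one_pow 2),
      isMaxOn_quarticForm_single hμM hbM.le hiM (by norm_num)]

/-- if `max μᵢ > b`, then `f_max = max μᵢ` and the maximizers of `f` on the unit
sphere are exactly the vectors `±e_i` over the indices `i` with `μ i` maximal. -/
theorem stmt_4 (k : ℕ) (hk : 2 ≤ k) (b : ℝ) (hb : 0 < b)
    (μ : Fin k → ℝ) (hμ : ∀ i, 0 < μ i)
    (f : (Fin k → ℝ) → ℝ)
    (hf : ∀ x, f x = ∑ i, μ i * x i ^ 4 +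
      b * ∑ i, ∑ j ∈ Finset.univ.erase i, x i ^ 2 * x j ^ 2)
    (S : Set (Fin k → ℝ)) (hS : S = {x | ∑ i, x i ^ 2 = 1})
    (fmax : ℝ) (hfmax : IsGreatest (f '' S) fmax)
    (M : ℝ) (hM : IsGreatest (Set.range μ) M) (hbM : b < M) :
    fmax = M ∧
    (∀ x ∈ S, (IsMaxOn f S x ↔
      ∃ i, μ i = M ∧ (x = Pi.single i 1 ∨ x = Pi.single i (-1)))) :=
  stmt_4_general k b μ f hf S hS fmax hfmax M hM hbM
end

section
/- If μᵢ < b for every i ∈ {1, …, k}, then f_max = b − (Σ_{j=1}^k 1/(b − μⱼ))^{−1}; in particular f_max < b. Moreover, the maximizers of f on the unit sphere S^{k−1} are exactly the points x ∈ ℝ^k with xᵢ² = (b − f_max)/(b − μᵢ) for every i, i.e. xᵢ = ±((b − f_max)/(b − μᵢ))^{1/2} with arbitrary independent choices of signs. -/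
/-!
Writing `yᵢ = xᵢ²` and `cᵢ = b - μᵢ > 0`, on the sphere `∑ yᵢ = 1` the quartic becomes
`f x = b (∑ yᵢ)² - ∑ cᵢ yᵢ² = b - ∑ cᵢ yᵢ²`. Completing the square under the constraint `∑ yᵢ = 1`,
`∑ cᵢ yᵢ² = m + ∑ cᵢ (yᵢ - m / cᵢ)²` with `m = (∑ 1 / cᵢ)⁻¹`, so `f ≤ b - m` on the sphere, with
equality exactly when `yᵢ = m / cᵢ` for all `i`; these values are nonnegative and sum to `1`,
so they are attained.
-/

open Finset

lemma sum_sum_erase_mul_eq {ι R : Type*} [Fintype ι] [DecidableEq ι] [CommRing R] (a : ι → R) :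
    ∑ i, ∑ j ∈ univ.erase i, a i * a j = (∑ i, a i) ^ 2 - ∑ i, a i ^ 2 := by
  simp_rw [← mul_sum, sum_erase_eq_sub (mem_univ _), mul_sub, sum_sub_distrib, ← sum_mul, sq]

lemma isMaxOn_iff_eq_of_isGreatest_image {α β : Type*} [PartialOrder β] {f : α → β} {s : Set α}
    {M : β} (hM : IsGreatest (f '' s) M) {x : α} (hx : x ∈ s) : IsMaxOn f s x ↔ f x = M := by
  refine ⟨fun hmax => le_antisymm (hM.2 ⟨x, hx, rfl⟩) ?_, fun h y hy => h ▸ hM.2 ⟨y, hy, rfl⟩⟩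
  obtain ⟨z, hz, rfl⟩ := hM.1
  exact hmax hz

section WeightedSquares

variable {ι : Type*} [Fintype ι] {c y : ι → ℝ}

lemma inv_sum_inv_pos [Nonempty ι] (hc : ∀ i, 0 < c i) : 0 < (∑ j, (c j)⁻¹)⁻¹ :=
  inv_pos.mpr (sum_pos (fun i _ => inv_pos.mpr (hc i)) univ_nonempty)

lemma sum_inv_sum_inv_div [Nonempty ι] (hc : ∀ i, 0 < c i) :
    ∑ i, (∑ j, (c j)⁻¹)⁻¹ / c i = 1 := by
  simp_rw [div_eq_mul_inv, ← mul_sum]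
  exact inv_mul_cancel₀ (inv_pos.mp (inv_sum_inv_pos hc)).ne'

lemma sum_mul_sq_eq_inv_sum_inv_add (hc : ∀ i, 0 < c i) (hy : ∑ i, y i = 1) :
    ∑ i, c i * y i ^ 2 =
      (∑ j, (c j)⁻¹)⁻¹ + ∑ i, c i * (y i - (∑ j, (c j)⁻¹)⁻¹ / c i) ^ 2 := by
  have : Nonempty ι := univ_nonempty_iff.mp (nonempty_of_sum_ne_zero (hy ▸ one_ne_zero))
  set m := (∑ j, (c j)⁻¹)⁻¹
  have hexpand : ∀ i, c i * (y i - m / c i) ^ 2 = c i * y i ^ 2 - 2 * m * y i + m * (m / c i) := by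
    intro i
    field_simp [(hc i).ne']
    ring
  simp_rw [hexpand, sum_add_distrib, sum_sub_distrib, ← mul_sum, hy]
  rw [sum_inv_sum_inv_div hc]
  ring

lemma inv_sum_inv_le_sum_mul_sq (hc : ∀ i, 0 < c i) (hy : ∑ i, y i = 1) :
    (∑ j, (c j)⁻¹)⁻¹ ≤ ∑ i, c i * y i ^ 2 := by
  rw [sum_mul_sq_eq_inv_sum_inv_add hc hy, le_add_iff_nonneg_right]
  exact sum_nonneg fun i _ => mul_nonneg (hc i).le (sq_nonneg _)

lemma sum_mul_sq_eq_inv_sum_inv_iff (hc : ∀ i, 0 < c i) (hy : ∑ i, y i = 1) :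
    ∑ i, c i * y i ^ 2 = (∑ j, (c j)⁻¹)⁻¹ ↔ ∀ i, y i = (∑ j, (c j)⁻¹)⁻¹ / c i := by
  rw [sum_mul_sq_eq_inv_sum_inv_add hc hy, add_eq_left,
    sum_eq_zero_iff_of_nonneg fun i _ => mul_nonneg (hc i).le (sq_nonneg _)]
  simp only [mem_univ, true_implies, mul_eq_zero, (hc _).ne', false_or, sq_eq_zero_iff, sub_eq_zero]

lemma exists_sum_sq_eq_one_sq_eq_inv_sum_inv_div [Nonempty ι] (hc : ∀ i, 0 < c i) :
    ∃ x : ι → ℝ, ∑ i, x i ^ 2 = 1 ∧ ∀ i, x i ^ 2 = (∑ j, (c j)⁻¹)⁻¹ / c i := by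
  have hsq : ∀ i, √((∑ j, (c j)⁻¹)⁻¹ / c i) ^ 2 = (∑ j, (c j)⁻¹)⁻¹ / c i :=
    fun i => Real.sq_sqrt (div_pos (inv_sum_inv_pos hc) (hc i)).le
  exact ⟨_, by simp only [hsq, sum_inv_sum_inv_div hc], hsq⟩

end WeightedSquares

lemma sum_mul_pow_four_add_mul_sum_sum_erase_eq {ι : Type*} [Fintype ι] [DecidableEq ι]
    (μ : ι → ℝ) (b : ℝ) {x : ι → ℝ} (hx : ∑ i, x i ^ 2 = 1) :
    ∑ i, μ i * x i ^ 4 + b * ∑ i, ∑ j ∈ univ.erase i, x i ^ 2 * x j ^ 2 =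
      b - ∑ i, (b - μ i) * (x i ^ 2) ^ 2 := by
  rw [sum_sum_erase_mul_eq, hx]
  simp only [sub_mul, sum_sub_distrib, ← mul_sum, ← pow_mul]
  ring

theorem stmt_5_general (k : ℕ) (b : ℝ)
    (μ : Fin k → ℝ)
    (f : (Fin k → ℝ) → ℝ)
    (hf : ∀ x, f x = ∑ i, μ i * x i ^ 4 +
      b * ∑ i, ∑ j ∈ Finset.univ.erase i, x i ^ 2 * x j ^ 2)
    (S : Set (Fin k → ℝ)) (hS : S = {x | ∑ i, x i ^ 2 = 1})
    (fmax : ℝ) (hfmax : IsGreatest (f '' S) fmax)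
    (hμb : ∀ i, μ i < b) :
    fmax = b - (∑ j, 1 / (b - μ j))⁻¹ ∧
    fmax < b ∧
    (∀ x ∈ S, (IsMaxOn f S x ↔ ∀ i, x i ^ 2 = (b - fmax) / (b - μ i))) := by
  subst hS
  have hc : ∀ i, 0 < b - μ i := fun i => sub_pos.mpr (hμb i)
  set m := (∑ j, (b - μ j)⁻¹)⁻¹
  have hf_sphere : ∀ x ∈ {x : Fin k → ℝ | ∑ i, x i ^ 2 = 1},
      f x = b - ∑ i, (b - μ i) * (x i ^ 2) ^ 2 :=
    fun x hx => (hf x).trans (sum_mul_pow_four_add_mul_sum_sum_erase_eq μ b hx)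
  have hmax_iff : ∀ x ∈ {x : Fin k → ℝ | ∑ i, x i ^ 2 = 1},
      f x = b - m ↔ ∀ i, x i ^ 2 = m / (b - μ i) := fun x hx => by
    rw [hf_sphere x hx, sub_right_inj]
    exact sum_mul_sq_eq_inv_sum_inv_iff (y := fun i => x i ^ 2) hc hx
  obtain ⟨x₁, hx₁, -⟩ := hfmax.1
  have : Nonempty (Fin k) :=
    univ_nonempty_iff.mp (nonempty_of_sum_ne_zero (ne_of_eq_of_ne hx₁ one_ne_zero))
  obtain ⟨x₀, hx₀S, hx₀⟩ := exists_sum_sq_eq_one_sq_eq_inv_sum_inv_div hc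
  have hgreatest : IsGreatest (f '' {x | ∑ i, x i ^ 2 = 1}) (b - m) := by
    refine ⟨⟨x₀, hx₀S, (hmax_iff x₀ hx₀S).mpr hx₀⟩, ?_⟩
    rintro _ ⟨x, hx, rfl⟩
    rw [hf_sphere x hx, sub_le_sub_iff_left]
    exact inv_sum_inv_le_sum_mul_sq (y := fun i => x i ^ 2) hc hx
  have hfmax_eq : fmax = b - m := hfmax.unique hgreatest
  refine ⟨by simpa only [one_div] using hfmax_eq, by linarith [inv_sum_inv_pos hc], fun x hx => ?_⟩
  rw [isMaxOn_iff_eq_of_isGreatest_image hfmax hx, hfmax_eq, sub_sub_cancel]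
  exact hmax_iff x hx

/-- if `μᵢ < b` for every `i`, then `f_max = b - (∑ⱼ 1/(b - μⱼ))⁻¹ < b`, and the
maximizers of `f` on the unit sphere are exactly the points `x` with
`xᵢ² = (b - f_max)/(b - μᵢ)` for every `i`. -/
theorem stmt_5 (k : ℕ) (hk : 2 ≤ k) (b : ℝ) (hb : 0 < b)
    (μ : Fin k → ℝ) (hμ : ∀ i, 0 < μ i)
    (f : (Fin k → ℝ) → ℝ)
    (hf : ∀ x, f x = ∑ i, μ i * x i ^ 4 +
      b * ∑ i, ∑ j ∈ Finset.univ.erase i, x i ^ 2 * x j ^ 2)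
    (S : Set (Fin k → ℝ)) (hS : S = {x | ∑ i, x i ^ 2 = 1})
    (fmax : ℝ) (hfmax : IsGreatest (f '' S) fmax)
    (hμb : ∀ i, μ i < b) :
    fmax = b - (∑ j, 1 / (b - μ j))⁻¹ ∧
    fmax < b ∧
    (∀ x ∈ S, (IsMaxOn f S x ↔ ∀ i, x i ^ 2 = (b - fmax) / (b - μ i))) :=
  stmt_5_general k b μ f hf S hS fmax hfmax hμb
end

section
/- If max_{1≤i≤k} μᵢ = b, then f_max = b, and the maximizers of f on the unit sphere S^{k−1} are exactly the unit vectors x with xᵢ = 0 for every index i such that μᵢ < b. -/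
/-! Since `∑_{i ≠ j} xᵢ² xⱼ² = (∑ xᵢ²)² - ∑ xᵢ⁴`, on the unit sphere `f x = b + ∑ (μᵢ - b) xᵢ⁴`.
When every `μᵢ ≤ b` the correction sum is `≤ 0`, it vanishes exactly when `xᵢ = 0` wherever
`μᵢ < b`, and a coordinate vector `e_{i₀}` with `μ_{i₀} = b` attains the value `b`. -/

open Finset

lemma sub_mul_pow_four_nonpos {ι : Type*} {μ : ι → ℝ} {b : ℝ} (hμ : ∀ i, μ i ≤ b)
    (x : ι → ℝ) (i : ι) : (μ i - b) * x i ^ 4 ≤ 0 :=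
  mul_nonpos_of_nonpos_of_nonneg (sub_nonpos.2 (hμ i)) (by positivity)

section QuarticForm

variable {ι : Type*} [Fintype ι]

lemma sum_sum_erase_sq_mul_sq [DecidableEq ι] (x : ι → ℝ) :
    ∑ i, ∑ j ∈ univ.erase i, x i ^ 2 * x j ^ 2 = (∑ i, x i ^ 2) ^ 2 - ∑ i, x i ^ 4 := by
  simp only [← mul_sum, sum_erase_eq_sub (mem_univ _), sum_sub_distrib, ← sum_mul]
  ring_nf

lemma sum_mul_pow_four_add_mul_sum_erase [DecidableEq ι] (μ : ι → ℝ) (b : ℝ) (x : ι → ℝ) :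
    ∑ i, μ i * x i ^ 4 + b * ∑ i, ∑ j ∈ univ.erase i, x i ^ 2 * x j ^ 2
      = b * (∑ i, x i ^ 2) ^ 2 + ∑ i, (μ i - b) * x i ^ 4 := by
  rw [sum_sum_erase_sq_mul_sq]
  simp only [sub_mul, sum_sub_distrib, ← mul_sum]
  ring

variable {μ : ι → ℝ} {b : ℝ}

lemma sum_sub_mul_pow_four_nonpos (hμ : ∀ i, μ i ≤ b) (x : ι → ℝ) :
    ∑ i, (μ i - b) * x i ^ 4 ≤ 0 :=
  sum_nonpos fun i _ => sub_mul_pow_four_nonpos hμ x i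

lemma sum_sub_mul_pow_four_eq_zero_iff (hμ : ∀ i, μ i ≤ b) (x : ι → ℝ) :
    ∑ i, (μ i - b) * x i ^ 4 = 0 ↔ ∀ i, μ i < b → x i = 0 := by
  rw [sum_eq_zero_iff_of_nonpos fun i _ => sub_mul_pow_four_nonpos hμ x i]
  refine forall_congr' fun i => ?_
  simp only [mem_univ, true_implies, mul_eq_zero, sub_eq_zero, pow_eq_zero_iff, ne_eq,
    OfNat.ofNat_ne_zero, not_false_eq_true]
  exact ⟨fun h hlt => h.resolve_left hlt.ne, fun h => (hμ i).eq_or_lt.imp_right h⟩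

end QuarticForm

lemma IsGreatest.isMaxOn_iff {α β : Type*} [PartialOrder β] {f : α → β} {s : Set α} {m : β}
    (h : IsGreatest (f '' s) m) {x : α} (hx : x ∈ s) : IsMaxOn f s x ↔ f x = m := by
  obtain ⟨⟨y, hy, rfl⟩, hle⟩ := h
  refine ⟨fun hmax => (hle ⟨x, hx, rfl⟩).antisymm (hmax hy), fun hfx z hz => ?_⟩
  rw [Set.mem_ofPred_eq, hfx]
  exact hle ⟨z, hz, rfl⟩

theorem stmt_6_general (k : ℕ) (b : ℝ)
    (μ : Fin k → ℝ)
    (f : (Fin k → ℝ) → ℝ)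
    (hf : ∀ x, f x = ∑ i, μ i * x i ^ 4 +
      b * ∑ i, ∑ j ∈ Finset.univ.erase i, x i ^ 2 * x j ^ 2)
    (S : Set (Fin k → ℝ)) (hS : S = {x | ∑ i, x i ^ 2 = 1})
    (fmax : ℝ) (hfmax : IsGreatest (f '' S) fmax)
    (hMb : IsGreatest (Set.range μ) b) :
    fmax = b ∧
    (∀ x ∈ S, (IsMaxOn f S x ↔ ∀ i, μ i < b → x i = 0)) := by
  subst hS
  have hμ_le : ∀ i, μ i ≤ b := fun i => hMb.2 ⟨i, rfl⟩
  have hf_sphere : ∀ x ∈ {x : Fin k → ℝ | ∑ i, x i ^ 2 = 1},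
      f x = b + ∑ i, (μ i - b) * x i ^ 4 := by
    intro x hx
    rw [hf, sum_mul_pow_four_add_mul_sum_erase, show ∑ i, x i ^ 2 = 1 from hx, one_pow, mul_one]
  obtain ⟨i₀, hi₀⟩ := hMb.1
  have he_mem : Pi.single i₀ 1 ∈ {x : Fin k → ℝ | ∑ i, x i ^ 2 = 1} := by
    simp [Pi.single_apply, ite_pow]
  have hb_greatest : IsGreatest (f '' {x | ∑ i, x i ^ 2 = 1}) b := by
    refine ⟨⟨Pi.single i₀ 1, he_mem, ?_⟩, ?_⟩
    · rw [hf_sphere _ he_mem]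
      simp [Pi.single_apply, ite_pow, hi₀]
    · rintro _ ⟨x, hx, rfl⟩
      rw [hf_sphere x hx]
      linarith [sum_sub_mul_pow_four_nonpos hμ_le x]
  refine ⟨hfmax.unique hb_greatest, fun x hx => ?_⟩
  rw [hb_greatest.isMaxOn_iff hx, hf_sphere x hx, add_eq_left,
    sum_sub_mul_pow_four_eq_zero_iff hμ_le]

/-- if `max μᵢ = b`, then `f_max = b` and the maximizers of `f` on the unit sphere
are exactly the unit vectors `x` with `xᵢ = 0` for every index `i` with `μᵢ < b`. -/
theorem stmt_6 (k : ℕ) (hk : 2 ≤ k) (b : ℝ) (hb : 0 < b)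
    (μ : Fin k → ℝ) (hμ : ∀ i, 0 < μ i)
    (f : (Fin k → ℝ) → ℝ)
    (hf : ∀ x, f x = ∑ i, μ i * x i ^ 4 +
      b * ∑ i, ∑ j ∈ Finset.univ.erase i, x i ^ 2 * x j ^ 2)
    (S : Set (Fin k → ℝ)) (hS : S = {x | ∑ i, x i ^ 2 = 1})
    (fmax : ℝ) (hfmax : IsGreatest (f '' S) fmax)
    (hMb : IsGreatest (Set.range μ) b) :
    fmax = b ∧
    (∀ x ∈ S, (IsMaxOn f S x ↔ ∀ i, μ i < b → x i = 0)) :=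
  stmt_6_general k b μ f hf S hS fmax hfmax hMb
end
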